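/- For every R > 0: there exists λ* ∈ (0,1) such that the Nash effort matrix e*(z_NA(R)) equals the Pareto effort matrix a*(z_Pe(λ*), λ*) if and only if there exists λ* ∈ (0,1) satisfying the three conditions: (1 + R k12)/(1 + R(k12 + k11)) = (λ* z11_Pe + (1 − λ*) z12_Pe)/λ*, (1 + R k22)/(1 + R(k21 + k22)) = (λ* z21_Pe + (1 − λ*) z22_Pe)/λ*, and (1 + R k12)/(1 + R k11) = (1 + R k22)/(1 + R k21) = (1 − λ*)/λ*, where z_Pe is evaluated at λ*; in that case e*(z_NA(R)) = a*(z_Pe(λ*), λ*). -/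

import Mathlib

/-! Entry by entry, `e*(z_NA(R)) = a*(z, λ)` says that the two entries of row `i` of `z_NA(R)`
are `λ z_{i1} + λ̄ z_{i2}` divided by `λ` and by `λ̄` respectively. That is equivalent to the
first entry being `(λ z_{i1} + λ̄ z_{i2}) / λ` and the ratio of the two entries being `λ̄ / λ`,
and the common denominator of the row of `z_NA(R)` cancels from that ratio. -/

/-- The Pareto-optimal sensitivities `z_Pe(λ)`. -/
noncomputable def zPe (k11 k12 k21 k22 lam : ℝ) : Fin 2 → Fin 2 → ℝ :=
  ![![(1 - lam) ^ 2 * k12 / (lam ^ 2 * k11 + (1 - lam) ^ 2 * k12),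
      lam ^ 2 * k11 / (lam ^ 2 * k11 + (1 - lam) ^ 2 * k12)],
    ![(1 - lam) ^ 2 * k22 / (lam ^ 2 * k21 + (1 - lam) ^ 2 * k22),
      lam ^ 2 * k21 / (lam ^ 2 * k21 + (1 - lam) ^ 2 * k22)]]

/-- The optimal sensitivities `z_NA(R)` in the no-Planner (Nash) model. -/
noncomputable def zNA (k11 k12 k21 k22 R : ℝ) : Fin 2 → Fin 2 → ℝ :=
  ![![(1 + R * k12) / (1 + R * (k11 + k12)), (1 + R * k11) / (1 + R * (k11 + k12))],
    ![(1 + R * k22) / (1 + R * (k21 + k22)), (1 + R * k21) / (1 + R * (k21 + k22))]]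

/-- The Pareto effort matrix `a*(z, λ)`. -/
noncomputable def aStar (k11 k12 k21 k22 lam : ℝ) (z : Fin 2 → Fin 2 → ℝ) : Fin 2 → Fin 2 → ℝ :=
  ![![(lam * z 0 0 + (1 - lam) * z 0 1) / (lam * k11),
      -((lam * z 0 0 + (1 - lam) * z 0 1) / ((1 - lam) * k12))],
    ![-((lam * z 1 0 + (1 - lam) * z 1 1) / (lam * k21)),
      (lam * z 1 0 + (1 - lam) * z 1 1) / ((1 - lam) * k22)]]

/-- The Nash effort matrix `e*(z)`. -/
noncomputable def eStar (k11 k12 k21 k22 : ℝ) (z : Fin 2 → Fin 2 → ℝ) : Fin 2 → Fin 2 → ℝ :=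
  ![![z 0 0 / k11, -(z 0 1 / k12)], ![-(z 1 0 / k21), z 1 1 / k22]]

theorem div_eq_div_mul_and_div_eq_div_one_sub_mul_iff {p q s k k' lam : ℝ} (hk : k ≠ 0)
    (hk' : k' ≠ 0) (hlam : lam ≠ 0) (hlam' : 1 - lam ≠ 0) (hq : q ≠ 0) :
    (p / k = s / (lam * k) ∧ q / k' = s / ((1 - lam) * k')) ↔
      (p = s / lam ∧ p / q = (1 - lam) / lam) := by
  rw [← div_div, ← div_div, div_left_inj' hk, div_left_inj' hk']
  refine and_congr_right fun hp => ?_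
  rw [hp, div_right_comm, div_left_inj' hlam, eq_div_iff hlam', div_eq_iff hq, mul_comm, eq_comm]

theorem eStar_zNA_eq_aStar_iff {k11 k12 k21 k22 R lam : ℝ} (hk11 : 0 < k11) (hk12 : 0 < k12)
    (hk21 : 0 < k21) (hk22 : 0 < k22) (hR : 0 ≤ R) (hlam : lam ∈ Set.Ioo (0 : ℝ) 1)
    (z : Fin 2 → Fin 2 → ℝ) :
    eStar k11 k12 k21 k22 (zNA k11 k12 k21 k22 R) = aStar k11 k12 k21 k22 lam z ↔
      (1 + R * k12) / (1 + R * (k12 + k11)) = (lam * z 0 0 + (1 - lam) * z 0 1) / lam ∧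
        (1 + R * k22) / (1 + R * (k21 + k22)) = (lam * z 1 0 + (1 - lam) * z 1 1) / lam ∧
        (1 + R * k12) / (1 + R * k11) = (1 - lam) / lam ∧
        (1 + R * k22) / (1 + R * k21) = (1 - lam) / lam := by
  have hlam₀ : lam ≠ 0 := hlam.1.ne'
  have hlam₁ : 1 - lam ≠ 0 := (sub_pos.2 hlam.2).ne'
  have hc₁ : 1 + R * (k11 + k12) ≠ 0 := by positivity
  have hc₂ : 1 + R * (k21 + k22) ≠ 0 := by positivity
  have hb₁ : 1 + R * k11 ≠ 0 := by positivity
  have hb₂ : 1 + R * k21 ≠ 0 := by positivity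
  simp only [eStar, aStar, zNA, Matrix.vecCons_inj, neg_inj, Matrix.cons_val_zero,
    Matrix.cons_val_one, and_true]
  rw [div_eq_div_mul_and_div_eq_div_one_sub_mul_iff hk11.ne' hk12.ne' hlam₀ hlam₁
      (div_ne_zero hb₁ hc₁),
    div_eq_div_mul_and_div_eq_div_one_sub_mul_iff hk21.ne' hk22.ne' hlam₀ hlam₁
      (div_ne_zero hb₂ hc₂),
    div_div_div_cancel_right₀ hc₁, div_div_div_cancel_right₀ hc₂, add_comm k11 k12,
    and_and_and_comm, and_assoc]

/-- for every `R > 0`, the Nash effort `e*(z_NA(R))` coincides with a Pareto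
effort `a*(z_Pe(λ*), λ*)` for some `λ* ∈ (0,1)` iff there exists `λ* ∈ (0,1)` satisfying the
three first-order conditions; in that case `e*(z_NA(R)) = a*(z_Pe(λ*), λ*)`. -/
theorem nash_is_pareto_iff (k11 k12 k21 k22 : ℝ)
    (hk11 : 0 < k11) (hk12 : 0 < k12) (hk21 : 0 < k21) (hk22 : 0 < k22)
    (R : ℝ) (hR : 0 < R) :
    ((∃ lam ∈ Set.Ioo (0 : ℝ) 1,
        eStar k11 k12 k21 k22 (zNA k11 k12 k21 k22 R)
          = aStar k11 k12 k21 k22 lam (zPe k11 k12 k21 k22 lam)) ↔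
      (∃ lam ∈ Set.Ioo (0 : ℝ) 1,
        (1 + R * k12) / (1 + R * (k12 + k11))
            = (lam * zPe k11 k12 k21 k22 lam 0 0 + (1 - lam) * zPe k11 k12 k21 k22 lam 0 1) / lam ∧
          (1 + R * k22) / (1 + R * (k21 + k22))
            = (lam * zPe k11 k12 k21 k22 lam 1 0 + (1 - lam) * zPe k11 k12 k21 k22 lam 1 1) / lam ∧
          (1 + R * k12) / (1 + R * k11) = (1 - lam) / lam ∧
          (1 + R * k22) / (1 + R * k21) = (1 - lam) / lam)) ∧
      ∀ lam ∈ Set.Ioo (0 : ℝ) 1,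
        ((1 + R * k12) / (1 + R * (k12 + k11))
            = (lam * zPe k11 k12 k21 k22 lam 0 0 + (1 - lam) * zPe k11 k12 k21 k22 lam 0 1) / lam ∧
          (1 + R * k22) / (1 + R * (k21 + k22))
            = (lam * zPe k11 k12 k21 k22 lam 1 0 + (1 - lam) * zPe k11 k12 k21 k22 lam 1 1) / lam ∧
          (1 + R * k12) / (1 + R * k11) = (1 - lam) / lam ∧
          (1 + R * k22) / (1 + R * k21) = (1 - lam) / lam) →
          eStar k11 k12 k21 k22 (zNA k11 k12 k21 k22 R)
            = aStar k11 k12 k21 k22 lam (zPe k11 k12 k21 k22 lam) := by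
  have key (lam : ℝ) (hlam : lam ∈ Set.Ioo (0 : ℝ) 1) :=
    eStar_zNA_eq_aStar_iff hk11 hk12 hk21 hk22 hR.le hlam (zPe k11 k12 k21 k22 lam)
  exact ⟨exists_congr fun lam => and_congr_right (key lam), fun lam hlam => (key lam hlam).2⟩
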